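/- arXiv:2603.07501 — 3 statements merged into one kernel-verified Lean document; each statement's English description precedes it below -/
import Mathlib

section
/- Let k be an even integer and t an odd integer with 0 < t < k. Let H = (V,E) be a k-uniform hypergraph with n vertices, m ≥ 1 edges, and minimum degree δ, and let λ be the least element of the set {k·∑_{e∈E} ∏_{i∈e} x_i : x ∈ ℝ^V, ∑_{i∈V} x_i^k = 1}. Suppose there exists a t-independent set S such that every vertex in S has degree δ, and every vertex i ∉ S satisfies |{e ∈ E(i) : e ∩ S ≠ ∅}| = ( (−λ)^{k/(k−t)} + d_i·(−λ)^{t/(k−t)} ) / ( δ^{t/(k−t)} + (−λ)^{t/(k−t)} ). Then α_t(H) = t(km − nλ)·(−λ)^{t/(k−t)} / ( (k−t)·δ^{k/(k−t)} + (kδ − tλ)·(−λ)^{t/(k−t)} ), and |S| = α_t(H). -/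
/-!
Write `μ = -λ`. For a `t`-independent set `T`, let `B` be the number of edges meeting `T`;
double counting gives `δ |T| ≤ t B`. By homogeneity, `-μ ∑ xᵢ^k ≤ k ∑_e ∏_{i ∈ e} xᵢ` for every
`x`, and the test vector equal to `-u` on `T` and `1` off `T` (with `t` odd, `k` even) turns this
into `k B (1 + u^t) ≤ k m + μ (|T| u^k + n - |T|)`. The choice `u = (δ/μ)^{1/(k-t)}` yields the
Hoffman-type bound on `|T|`. For the set `S` of the hypothesis every inequality used is an
equality: summing the condition over the vertices outside `S` counts each edge meeting `S`
exactly `k - t` times, which computes `|S|` as the bound, so `|S| = α_t(H)`.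
-/

open Finset

section Counting

variable {V : Type*} [DecidableEq V] (E : Finset (Finset V))

def vertexDegree (i : V) : ℕ := #{e ∈ E | i ∈ e}

def edgesMeeting (S : Finset V) : Finset (Finset V) := {e ∈ E | (e ∩ S).Nonempty}

def IsTIndependent (t : ℕ) (S : Finset V) : Prop := ∀ e ∈ E, #(e ∩ S) = 0 ∨ #(e ∩ S) = t

theorem sum_vertexDegree (T : Finset V) : ∑ i ∈ T, vertexDegree E i = ∑ e ∈ E, #(e ∩ T) := by
  simp_rw [vertexDegree, inter_comm _ T, ← filter_mem_eq_inter, card_eq_sum_ones, sum_filter]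
  exact sum_comm

theorem sum_vertexDegree_univ [Fintype V] {k : ℕ} (huniform : ∀ e ∈ E, #e = k) :
    ∑ i, vertexDegree E i = k * #E := by
  rw [sum_vertexDegree, sum_congr rfl fun e he => by rw [inter_univ, huniform e he],
    sum_const, smul_eq_mul, mul_comm]

theorem vertexDegree_edgesMeeting (S : Finset V) (i : V) :
    vertexDegree (edgesMeeting E S) i = #{e ∈ E | i ∈ e ∧ (e ∩ S).Nonempty} := by
  simp only [vertexDegree, edgesMeeting, filter_filter, and_comm]

variable {E} {t : ℕ} {S : Finset V}

theorem IsTIndependent.card_inter (hS : IsTIndependent E t S) {e : Finset V} (he : e ∈ E) :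
    #(e ∩ S) = if (e ∩ S).Nonempty then t else 0 := by
  split_ifs with hne
  · exact (hS e he).resolve_left hne.card_pos.ne'
  · rw [not_nonempty_iff_eq_empty.1 hne, card_empty]

theorem IsTIndependent.card_inter_of_mem_edgesMeeting (hS : IsTIndependent E t S) {e : Finset V}
    (he : e ∈ edgesMeeting E S) : #(e ∩ S) = t := by
  rw [edgesMeeting, mem_filter] at he
  rw [hS.card_inter he.1, if_pos he.2]

theorem IsTIndependent.sum_vertexDegree (hS : IsTIndependent E t S) :
    ∑ i ∈ S, vertexDegree E i = t * #(edgesMeeting E S) := by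
  rw [_root_.sum_vertexDegree, sum_congr rfl fun e he => hS.card_inter he, ← sum_filter,
    sum_const, smul_eq_mul, mul_comm, edgesMeeting]

theorem IsTIndependent.mul_card_le_mul_card_edgesMeeting {δ : ℕ}
    (hδ : ∀ i, δ ≤ vertexDegree E i) (hS : IsTIndependent E t S) :
    δ * #S ≤ t * #(edgesMeeting E S) := by
  rw [← hS.sum_vertexDegree, mul_comm, ← smul_eq_mul, ← sum_const]
  exact sum_le_sum fun i _ => hδ i

theorem IsTIndependent.sum_vertexDegree_edgesMeeting_compl [Fintype V] {k : ℕ}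
    (huniform : ∀ e ∈ E, #e = k) (hS : IsTIndependent E t S) :
    ∑ i ∈ Sᶜ, vertexDegree (edgesMeeting E S) i = #(edgesMeeting E S) * (k - t) := by
  rw [_root_.sum_vertexDegree, card_eq_sum_ones, sum_mul, one_mul]
  refine sum_congr rfl fun e he => ?_
  have := card_inter_add_card_sdiff e S
  rw [hS.card_inter_of_mem_edgesMeeting he, huniform e (mem_filter.1 he).1] at this
  rw [← sdiff_eq_inter_compl]
  omega

end Counting

section Spectral

variable {V : Type*} [Fintype V] {E : Finset (Finset V)} {k : ℕ}

theorem neg_mul_sum_pow_le_of_sum_pow_eq_one (hk : Even k) (hk0 : 0 < k)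
    (huniform : ∀ e ∈ E, #e = k) {μ : ℝ}
    (hμ : ∀ x : V → ℝ, ∑ i, x i ^ k = 1 → -μ ≤ k * ∑ e ∈ E, ∏ i ∈ e, x i) (x : V → ℝ) :
    -μ * ∑ i, x i ^ k ≤ k * ∑ e ∈ E, ∏ i ∈ e, x i := by
  have hpow : ∀ i ∈ univ, 0 ≤ x i ^ k := fun i _ => hk.pow_nonneg (x i)
  rcases (sum_nonneg hpow).eq_or_lt with hs | hs
  · have hx : ∀ i, x i = 0 := fun i =>
      pow_eq_zero_iff hk0.ne' |>.1 <| (sum_eq_zero_iff_of_nonneg hpow).1 hs.symm i (mem_univ i)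
    have hprod : ∀ e ∈ E, ∏ i ∈ e, x i = 0 := fun e he => by
      obtain ⟨i, hi⟩ := card_pos.1 ((huniform e he).symm ▸ hk0)
      exact prod_eq_zero hi (hx i)
    rw [← hs, sum_eq_zero hprod]
    simp
  · -- both sides are homogeneous of degree `k`, so rescale `x` onto the unit sphere
    set c : ℝ := (∑ i, x i ^ k)⁻¹ ^ ((k : ℝ)⁻¹)
    have hck : c ^ k = (∑ i, x i ^ k)⁻¹ := Real.rpow_inv_natCast_pow (inv_nonneg.2 hs.le) hk0.ne'
    have hprod : ∀ e ∈ E, ∏ i ∈ e, c * x i = c ^ k * ∏ i ∈ e, x i := fun e he => by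
      rw [prod_mul_distrib, prod_const, huniform e he]
    have h := hμ (fun i => c * x i) (by simp_rw [mul_pow, ← mul_sum, hck, inv_mul_cancel₀ hs.ne'])
    rw [sum_congr rfl hprod, ← mul_sum, hck, mul_left_comm] at h
    rw [mul_comm]
    exact (le_inv_mul_iff₀ hs).1 h

theorem one_le_of_forall_neg_mul_sum_pow_le [DecidableEq V] (hk : Even k) (hk0 : 0 < k)
    (huniform : ∀ e ∈ E, #e = k) (hE : E.Nonempty) {μ : ℝ}
    (hμ : ∀ x : V → ℝ, -μ * ∑ i, x i ^ k ≤ k * ∑ e ∈ E, ∏ i ∈ e, x i) : 1 ≤ μ := by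
  obtain ⟨e₀, he₀⟩ := hE
  obtain ⟨v₀, hv₀⟩ := card_pos.1 ((huniform e₀ he₀).symm ▸ hk0)
  set x : V → ℝ := fun i => if i ∈ e₀ then (if i = v₀ then -1 else 1) else 0
  have hnorm : ∑ i, x i ^ k = k := by
    have : ∀ i, x i ^ k = if i ∈ e₀ then 1 else 0 := fun i => by
      by_cases h₁ : i ∈ e₀ <;> by_cases h₂ : i = v₀ <;> simp [x, h₁, h₂, hk.neg_pow, hk0.ne']
    simp_rw [this, Fintype.sum_ite_mem, sum_const, huniform e₀ he₀, nsmul_one]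
  have hprod : ∀ e ∈ E, ∏ i ∈ e, x i = if e = e₀ then -1 else 0 := fun e he => by
    split_ifs with h
    · subst h
      rw [prod_congr rfl fun i hi => if_pos hi, prod_ite_eq' e v₀, if_pos hv₀]
    · obtain ⟨j, hj, hj₀⟩ := not_subset.1 fun hsub =>
        h (eq_of_subset_of_card_le hsub (by rw [huniform e he, huniform e₀ he₀]))
      exact prod_eq_zero hj (if_neg hj₀)
  have h := hμ x
  rw [hnorm, sum_congr rfl hprod, sum_ite_eq' E e₀, if_pos he₀] at h
  have hkR : (0 : ℝ) < k := by exact_mod_cast hk0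
  nlinarith

end Spectral

theorem Real.rpow_div_sub_eq_mul_rpow {x a b : ℝ} (hx : 0 ≤ x) (hb : 0 ≤ b) (hba : b < a) :
    x ^ (a / (a - b)) = x * x ^ (b / (a - b)) := by
  have hab : a - b ≠ 0 := (sub_pos.2 hba).ne'
  have hsplit : a / (a - b) = 1 + b / (a - b) := by field_simp; ring
  rw [hsplit, Real.rpow_add' hx (hsplit ▸ div_ne_zero (hb.trans_lt hba).ne' hab), Real.rpow_one]

/-- With `μ = -λ`, the Hoffman-type bound reads
`α_t(H) ≤ t (k m + n μ) μ^{t/(k-t)} / hoffmanDenominator k t δ μ`. -/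
noncomputable def hoffmanDenominator (k t δ : ℕ) (μ : ℝ) : ℝ :=
  (k - t) * (δ : ℝ) ^ ((k : ℝ) / (k - t)) + (k * δ + t * μ) * μ ^ ((t : ℝ) / (k - t))

theorem hoffmanDenominator_pos {k t δ : ℕ} {μ : ℝ} (ht : 0 < t) (htk : t < k) (hμ : 0 < μ) :
    0 < hoffmanDenominator k t δ μ := by
  have hktR : (0 : ℝ) < k - t := sub_pos.2 (by exact_mod_cast htk)
  have := Real.rpow_pos_of_pos hμ ((t : ℝ) / (k - t))
  unfold hoffmanDenominator
  positivity

section HoffmanBound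

variable {V : Type*} [Fintype V] [DecidableEq V] {E : Finset (Finset V)} {k t : ℕ}
  {S : Finset V} {μ : ℝ}

theorem IsTIndependent.card_edgesMeeting_mul_le (hk : Even k) (ht : Odd t)
    (hμ : ∀ x : V → ℝ, -μ * ∑ i, x i ^ k ≤ k * ∑ e ∈ E, ∏ i ∈ e, x i)
    (hS : IsTIndependent E t S) (u : ℝ) :
    k * #(edgesMeeting E S) * (1 + u ^ t) ≤
      k * #E + μ * (#S * u ^ k + (Fintype.card V - #S)) := by
  have hnorm : ∑ i : V, (if i ∈ S then -u else 1) ^ k = #S * u ^ k + (Fintype.card V - #S) := by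
    have hin : ∀ i ∈ S, (if i ∈ S then -u else 1) ^ k = u ^ k := fun i hi => by
      rw [if_pos hi, hk.neg_pow]
    have hout : ∀ i ∈ Sᶜ, (if i ∈ S then -u else 1) ^ k = 1 := fun i hi => by
      rw [if_neg (mem_compl.1 hi), one_pow]
    rw [← sum_add_sum_compl S, sum_congr rfl hin, sum_congr rfl hout, sum_const, sum_const,
      card_compl, nsmul_eq_mul, nsmul_one, Nat.cast_sub (card_le_univ S)]
  have hprod : ∀ e ∈ E, ∏ i ∈ e, (if i ∈ S then -u else 1) =
      1 - if (e ∩ S).Nonempty then 1 + u ^ t else 0 := fun e he => by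
    rw [prod_ite_mem, prod_const, hS.card_inter he]
    split_ifs <;> simp [ht.neg_pow]
  have h := hμ fun i => if i ∈ S then -u else 1
  rw [hnorm, sum_congr rfl hprod, sum_sub_distrib, ← sum_filter, sum_const, sum_const] at h
  simp only [nsmul_eq_mul, mul_one] at h
  rw [edgesMeeting]
  linarith

theorem IsTIndependent.card_mul_hoffmanDenominator_le (hk : Even k) (ht : Odd t) (htk : t < k)
    {δ : ℕ} (hδ : ∀ i, δ ≤ vertexDegree E i) (hμ0 : 0 < μ)
    (hμ : ∀ x : V → ℝ, -μ * ∑ i, x i ^ k ≤ k * ∑ e ∈ E, ∏ i ∈ e, x i)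
    (hS : IsTIndependent E t S) :
    #S * hoffmanDenominator k t δ μ ≤
      t * (k * #E + Fintype.card V * μ) * μ ^ ((t : ℝ) / (k - t)) := by
  have htkR : (t : ℝ) < k := by exact_mod_cast htk
  set p := μ ^ ((t : ℝ) / (k - t))
  have hSn : (#S : ℝ) ≤ Fintype.card V := by exact_mod_cast card_le_univ S
  unfold hoffmanDenominator
  rcases δ.eq_zero_or_pos with rfl | hδ0
  · -- for `δ = 0` the bound only says `|S| ≤ n`
    rw [Nat.cast_zero, Real.zero_rpow (div_pos (by linarith) (by linarith)).ne']
    nlinarith [mul_le_mul_of_nonneg_right hSn (by positivity : (0 : ℝ) ≤ t * μ * p),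
      (by positivity : (0 : ℝ) ≤ t * k * #E * p)]
  have hδR : (0 : ℝ) < δ := by exact_mod_cast hδ0
  -- the ratio of the two values of the test vector that makes the bound sharp
  set u := ((δ : ℝ) / μ) ^ (1 / ((k : ℝ) - t))
  have hu : ∀ n : ℕ, u ^ n * μ ^ ((n : ℝ) / (k - t)) = δ ^ ((n : ℝ) / (k - t)) := fun n => by
    rw [← Real.rpow_natCast, ← Real.rpow_mul (div_pos hδR hμ0).le, Real.div_rpow hδR.le hμ0.le,
      one_div_mul_eq_div, div_mul_cancel₀ _ (Real.rpow_pos_of_pos hμ0 _).ne']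
  have hut := hu t
  have huk := hu k
  have hδk := Real.rpow_div_sub_eq_mul_rpow hδR.le (Nat.cast_nonneg t) htkR
  rw [Real.rpow_div_sub_eq_mul_rpow hμ0.le (Nat.cast_nonneg t) htkR, hδk] at huk
  rw [hδk]
  have hA := hS.card_edgesMeeting_mul_le hk ht hμ u
  have hB : (δ : ℝ) * #S ≤ t * #(edgesMeeting E S) := by
    exact_mod_cast hS.mul_card_le_mul_card_edgesMeeting hδ
  linear_combination t * p * hA + k * p * (1 + u ^ t) * hB + (t * #S) * huk - (k * δ * #S) * hut

theorem IsTIndependent.card_mul_hoffmanDenominator_eq (huniform : ∀ e ∈ E, #e = k)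
    (htk : t < k) (hμ0 : 0 < μ) {δ : ℕ} (hS : IsTIndependent E t S)
    (hSdeg : ∀ i ∈ S, vertexDegree E i = δ)
    (hout : ∀ i ∉ S, (vertexDegree (edgesMeeting E S) i : ℝ) =
      (μ ^ ((k : ℝ) / (k - t)) + vertexDegree E i * μ ^ ((t : ℝ) / (k - t))) /
        ((δ : ℝ) ^ ((t : ℝ) / (k - t)) + μ ^ ((t : ℝ) / (k - t)))) :
    #S * hoffmanDenominator k t δ μ =
      t * (k * #E + Fintype.card V * μ) * μ ^ ((t : ℝ) / (k - t)) := by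
  have htkR : (t : ℝ) < k := by exact_mod_cast htk
  set p := μ ^ ((t : ℝ) / (k - t))
  set D := (δ : ℝ) ^ ((t : ℝ) / (k - t))
  have hDp : 0 < D + p := add_pos_of_nonneg_of_pos (Real.rpow_nonneg δ.cast_nonneg _)
    (Real.rpow_pos_of_pos hμ0 _)
  have hdegS : ∑ i ∈ S, vertexDegree E i = δ * #S := by
    rw [sum_congr rfl hSdeg, sum_const, smul_eq_mul, mul_comm]
  have hB : (t : ℝ) * #(edgesMeeting E S) = δ * #S := by
    exact_mod_cast hS.sum_vertexDegree.symm.trans hdegS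
  have hdegSc : ∑ i ∈ Sᶜ, (vertexDegree E i : ℝ) = k * #E - δ * #S := by
    have := sum_add_sum_compl S (vertexDegree E)
    rw [hdegS, sum_vertexDegree_univ E huniform] at this
    rw [← Nat.cast_sum, eq_sub_iff_add_eq']
    exact_mod_cast this
  -- summed over `Sᶜ`, the left side of `hout` counts each edge meeting `S` exactly `k - t` times
  have hsum := sum_congr rfl fun i hi => hout i (mem_compl.1 hi)
  rw [← Nat.cast_sum, hS.sum_vertexDegree_edgesMeeting_compl huniform, ← sum_div,
    sum_add_distrib, sum_const, ← sum_mul, hdegSc, card_compl, nsmul_eq_mul,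
    Nat.cast_mul, Nat.cast_sub htk.le, Nat.cast_sub (card_le_univ S), eq_div_iff hDp.ne',
    Real.rpow_div_sub_eq_mul_rpow hμ0.le (Nat.cast_nonneg t) htkR] at hsum
  unfold hoffmanDenominator
  rw [Real.rpow_div_sub_eq_mul_rpow (Nat.cast_nonneg δ) (Nat.cast_nonneg t) htkR]
  linear_combination t * hsum - (k - t) * (D + p) * hB

end HoffmanBound

theorem hoffman_bound_even_hypergraph_equality_of_condition_general
    {V : Type*} [Fintype V] [DecidableEq V]
    (k t : ℕ) (hk : Even k) (ht : Odd t) (htk : t < k)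
    (E : Finset (Finset V)) (huniform : ∀ e ∈ E, e.card = k) (hm : 1 ≤ E.card)
    (δ : ℕ) (hδ : IsLeast (Set.range fun i : V => (E.filter fun e => i ∈ e).card) δ)
    (lam : ℝ)
    (hlam : IsLeast {y : ℝ | ∃ x : V → ℝ, ∑ i, x i ^ k = 1 ∧
      y = k * ∑ e ∈ E, ∏ i ∈ e, x i} lam)
    (α : ℕ)
    (hα : IsGreatest {c : ℕ | ∃ S : Finset V,
      (∀ e ∈ E, (e ∩ S).card = 0 ∨ (e ∩ S).card = t) ∧ S.card = c} α)
    (S : Finset V)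
    (hSindep : ∀ e ∈ E, (e ∩ S).card = 0 ∨ (e ∩ S).card = t)
    (hSdeg : ∀ i ∈ S, (E.filter fun e => i ∈ e).card = δ)
    (hout : ∀ i ∉ S,
      ((E.filter fun e => i ∈ e ∧ (e ∩ S).Nonempty).card : ℝ) =
        ((-lam) ^ ((k : ℝ) / (k - t)) +
          ((E.filter fun e => i ∈ e).card : ℝ) * (-lam) ^ ((t : ℝ) / (k - t))) /
          ((δ : ℝ) ^ ((t : ℝ) / (k - t)) + (-lam) ^ ((t : ℝ) / (k - t)))) :
    (α : ℝ) = t * (k * E.card - Fintype.card V * lam) * (-lam) ^ ((t : ℝ) / (k - t)) /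
      ((k - t) * (δ : ℝ) ^ ((k : ℝ) / (k - t)) +
        (k * δ - t * lam) * (-lam) ^ ((t : ℝ) / (k - t))) ∧
    S.card = α := by
  obtain ⟨μ, rfl⟩ : ∃ μ, lam = -μ := ⟨-lam, (neg_neg lam).symm⟩
  simp only [neg_neg, mul_neg, sub_neg_eq_add] at hout ⊢
  have hk0 : 0 < k := Nat.zero_lt_of_lt htk
  have hμ : ∀ x : V → ℝ, -μ * ∑ i, x i ^ k ≤ k * ∑ e ∈ E, ∏ i ∈ e, x i :=
    neg_mul_sum_pow_le_of_sum_pow_eq_one hk hk0 huniform fun x hx => hlam.2 ⟨x, hx, rfl⟩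
  have hμ0 : 0 < μ :=
    one_pos.trans_le (one_le_of_forall_neg_mul_sum_pow_le hk hk0 huniform (card_pos.1 hm) hμ)
  have hpos : 0 < hoffmanDenominator k t δ μ := hoffmanDenominator_pos ht.pos htk hμ0
  have hSeq := IsTIndependent.card_mul_hoffmanDenominator_eq huniform htk hμ0 hSindep hSdeg
    fun i hi => by
      rw [vertexDegree_edgesMeeting]
      exact hout i hi
  obtain ⟨T, hT, rfl⟩ := hα.1
  have hTS : #T ≤ #S := by
    have := IsTIndependent.card_mul_hoffmanDenominator_le hk ht htk (fun i => hδ.2 ⟨i, rfl⟩)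
      hμ0 hμ hT
    exact_mod_cast le_of_mul_le_mul_right (hSeq ▸ this) hpos
  have hST : #S = #T := le_antisymm (hα.2 ⟨S, hSindep, rfl⟩) hTS
  exact ⟨hST ▸ (eq_div_iff hpos.ne').2 hSeq, hST⟩

/-- **Hoffman-type bound for even uniform hypergraphs** (Theorem 3.1, sufficiency of the
equality condition). If there exists a `t`-independent set `S` in which every vertex has
minimum degree `δ` and such that every vertex `i ∉ S` lies in exactly
`((−λ)^{k/(k−t)} + d_i(−λ)^{t/(k−t)}) / (δ^{t/(k−t)} + (−λ)^{t/(k−t)})` edges meeting `S`,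
then the `t`-independence number attains the Hoffman-type bound and `|S| = α_t(H)`. -/
theorem hoffman_bound_even_hypergraph_equality_of_condition
    {V : Type*} [Fintype V] [DecidableEq V]
    (k t : ℕ) (hk : Even k) (ht : Odd t) (ht0 : 0 < t) (htk : t < k)
    (E : Finset (Finset V)) (huniform : ∀ e ∈ E, e.card = k) (hm : 1 ≤ E.card)
    (δ : ℕ) (hδ : IsLeast (Set.range fun i : V => (E.filter fun e => i ∈ e).card) δ)
    (lam : ℝ)
    (hlam : IsLeast {y : ℝ | ∃ x : V → ℝ, ∑ i, x i ^ k = 1 ∧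
      y = k * ∑ e ∈ E, ∏ i ∈ e, x i} lam)
    (α : ℕ)
    (hα : IsGreatest {c : ℕ | ∃ S : Finset V,
      (∀ e ∈ E, (e ∩ S).card = 0 ∨ (e ∩ S).card = t) ∧ S.card = c} α)
    (S : Finset V)
    (hSindep : ∀ e ∈ E, (e ∩ S).card = 0 ∨ (e ∩ S).card = t)
    (hSdeg : ∀ i ∈ S, (E.filter fun e => i ∈ e).card = δ)
    (hout : ∀ i ∉ S,
      ((E.filter fun e => i ∈ e ∧ (e ∩ S).Nonempty).card : ℝ) =
        ((-lam) ^ ((k : ℝ) / (k - t)) +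
          ((E.filter fun e => i ∈ e).card : ℝ) * (-lam) ^ ((t : ℝ) / (k - t))) /
          ((δ : ℝ) ^ ((t : ℝ) / (k - t)) + (-lam) ^ ((t : ℝ) / (k - t)))) :
    (α : ℝ) = t * (k * E.card - Fintype.card V * lam) * (-lam) ^ ((t : ℝ) / (k - t)) /
      ((k - t) * (δ : ℝ) ^ ((k : ℝ) / (k - t)) +
        (k * δ - t * lam) * (-lam) ^ ((t : ℝ) / (k - t))) ∧
    S.card = α :=
  hoffman_bound_even_hypergraph_equality_of_condition_general k t hk ht htk E huniform hm δ hδ lam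
    hlam α hα S hSindep hSdeg hout
end

section
/- Let k be an even integer with k ≥ 2. Let H = (V,E) be a k-uniform hypergraph with n vertices, m ≥ 1 edges, and minimum degree δ, and let λ be the least element of the set {k·∑_{e∈E} ∏_{i∈e} x_i : x ∈ ℝ^V, ∑_{i∈V} x_i^k = 1}. Then the 1-independence number (strong independence number) satisfies α_1(H) ≤ (km − nλ)·(−λ)^{1/(k−1)} / ( (k−1)·δ^{k/(k−1)} + (kδ − λ)·(−λ)^{1/(k−1)} ). -/
/-!
Evaluate the form `k ∑_e ∏_{i∈e} x_i`, which is at least `λ ∑ x_i^k` for every `x`, at the vector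
equal to `-t` on a maximum strongly independent set `S` and to `1` elsewhere. Every edge meets `S`
at most once, so its product is `1` or `-t`, and the edges meeting `S` number
`∑_{i∈S} d_i ≥ δ|S|`. This gives `|S| (kδ(1 + t) - λ(1 - t^k)) ≤ km - nλ` for every `t ≥ 0`, and
the choice `t = (δ / (-λ))^{1/(k-1)}` turns it into the stated bound. That `λ < 0` is seen on a
vector equal to `±1` on a single edge with exactly one negative entry.
-/

open Finset

section

variable {V : Type*} [Fintype V]

theorem mul_sum_pow_le_of_mem_lowerBounds {k : ℕ} (hk : Even k) (hk0 : k ≠ 0)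
    {E : Finset (Finset V)} (huniform : ∀ e ∈ E, e.card = k) {lam : ℝ}
    (hlam : lam ∈ lowerBounds {y : ℝ | ∃ x : V → ℝ, ∑ i, x i ^ k = 1 ∧
      y = k * ∑ e ∈ E, ∏ i ∈ e, x i})
    (x : V → ℝ) :
    lam * ∑ i, x i ^ k ≤ k * ∑ e ∈ E, ∏ i ∈ e, x i := by
  rcases (sum_nonneg fun i _ => hk.pow_nonneg (x i)).eq_or_lt with hzero | hpos
  · have hx : ∀ i, x i = 0 := fun i =>
      pow_eq_zero_iff hk0 |>.mp <| (sum_eq_zero_iff_of_nonneg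
        fun i _ => hk.pow_nonneg (x i)).mp hzero.symm i (mem_univ i)
    have hform : ∑ e ∈ E, ∏ i ∈ e, x i = 0 := sum_eq_zero fun e he => by
      obtain ⟨i, hi⟩ := card_pos.mp ((huniform e he).symm ▸ Nat.pos_of_ne_zero hk0)
      exact prod_eq_zero hi (hx i)
    rw [← hzero, hform]; simp
  · set s := ∑ i, x i ^ k
    -- The form is homogeneous of degree `k`, so it suffices to normalise `x`.
    set c := s⁻¹ ^ ((k : ℝ)⁻¹)
    have hc : c ^ k = s⁻¹ := Real.rpow_inv_natCast_pow (inv_nonneg.mpr hpos.le) hk0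
    have hnorm : ∑ i, (c * x i) ^ k = 1 := by
      simp only [mul_pow, ← mul_sum, hc]
      exact inv_mul_cancel₀ hpos.ne'
    have hscale : ∑ e ∈ E, ∏ i ∈ e, c * x i = s⁻¹ * ∑ e ∈ E, ∏ i ∈ e, x i := by
      rw [mul_sum]
      refine sum_congr rfl fun e he => ?_
      rw [prod_mul_distrib, prod_const, huniform e he, hc]
    have := hlam ⟨fun i => c * x i, hnorm, rfl⟩
    rw [hscale, mul_left_comm] at this
    rw [mul_comm]
    exact (le_inv_mul_iff₀ hpos).mp this

theorem le_neg_one_of_mem_lowerBounds {k : ℕ} (hk : Even k) (hk0 : k ≠ 0)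
    {E : Finset (Finset V)} (huniform : ∀ e ∈ E, e.card = k) (hE : E.Nonempty) {lam : ℝ}
    (hlam : lam ∈ lowerBounds {y : ℝ | ∃ x : V → ℝ, ∑ i, x i ^ k = 1 ∧
      y = k * ∑ e ∈ E, ∏ i ∈ e, x i}) :
    lam ≤ -1 := by
  classical
  obtain ⟨e₀, he₀⟩ := hE
  obtain ⟨v₀, hv₀⟩ := card_pos.mp ((huniform e₀ he₀).symm ▸ Nat.pos_of_ne_zero hk0)
  set x : V → ℝ := fun i => if i ∈ e₀ then (if i = v₀ then -1 else 1) else 0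
  have hnorm : ∑ i, x i ^ k = k := by
    have : ∀ i, x i ^ k = if i ∈ e₀ then 1 else 0 := fun i => by
      simp only [x]; split_ifs <;> simp [hk.neg_pow, hk0]
    simp only [this, sum_boole, filter_mem_eq_inter, univ_inter, huniform e₀ he₀]
  have hform : ∑ e ∈ E, ∏ i ∈ e, x i = -1 := by
    rw [sum_eq_single_of_mem e₀ he₀ fun e he hne => ?_]
    · rw [← mul_prod_erase e₀ x hv₀, prod_eq_one fun i hi => ?_]
      · simp [x, hv₀]
      · simp [x, mem_of_mem_erase hi, ne_of_mem_erase hi]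
    · obtain ⟨w, hwe, hwe₀⟩ : ∃ w ∈ e, w ∉ e₀ := not_subset.mp fun hsub =>
        hne (eq_of_subset_of_card_le hsub (by rw [huniform e he, huniform e₀ he₀]))
      exact prod_eq_zero hwe (by simp [x, hwe₀])
  have := mul_sum_pow_le_of_mem_lowerBounds hk hk0 huniform hlam x
  rw [hnorm, hform] at this
  have hkpos : (0 : ℝ) < k := by positivity
  nlinarith

def IsStronglyIndependent [DecidableEq V] (E : Finset (Finset V)) (S : Finset V) : Prop :=
  ∀ e ∈ E, (e ∩ S).card = 0 ∨ (e ∩ S).card = 1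

theorem IsStronglyIndependent.card_mul_le [DecidableEq V] {k : ℕ} (hk : Even k) (hk0 : k ≠ 0)
    {E : Finset (Finset V)} (huniform : ∀ e ∈ E, e.card = k) {lam : ℝ}
    (hlam : lam ∈ lowerBounds {y : ℝ | ∃ x : V → ℝ, ∑ i, x i ^ k = 1 ∧
      y = k * ∑ e ∈ E, ∏ i ∈ e, x i})
    {δ : ℕ} (hδ : ∀ i, δ ≤ (E.filter fun e => i ∈ e).card)
    {S : Finset V} (hS : IsStronglyIndependent E S) {t : ℝ} (ht : 0 ≤ t) :
    S.card * (k * δ * (1 + t) - lam * (1 - t ^ k)) ≤ k * E.card - Fintype.card V * lam := by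
  set x : V → ℝ := fun i => if i ∈ S then -t else 1
  have hnorm : ∑ i, x i ^ k = Fintype.card V + S.card * (t ^ k - 1) := by
    have : ∀ i, x i ^ k = 1 + if i ∈ S then t ^ k - 1 else 0 := fun i => by
      simp only [x]; split_ifs <;> simp [hk.neg_pow]
    simp only [this, sum_add_distrib, sum_const, card_univ, nsmul_eq_mul, mul_one, sum_ite_mem,
      univ_inter]
  have hform : ∑ e ∈ E, ∏ i ∈ e, x i = E.card - (1 + t) * ∑ e ∈ E, (e ∩ S).card := by
    have : ∀ e ∈ E, ∏ i ∈ e, x i = 1 - (1 + t) * (e ∩ S).card := fun e he => by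
      rw [prod_ite_mem, prod_const]
      rcases hS e he with h | h <;> simp [h]
    simp [sum_congr rfl this, sum_sub_distrib, mul_sum]
  have hcount : (S.card * δ : ℝ) ≤ (∑ e ∈ E, (e ∩ S).card : ℕ) := by
    simp_rw [inter_comm _ S]
    exact_mod_cast le_sum_card_inter fun i _ => hδ i
  have := mul_sum_pow_le_of_mem_lowerBounds hk hk0 huniform hlam x
  rw [hnorm, hform] at this
  nlinarith [mul_le_mul_of_nonneg_left hcount (by positivity : (0 : ℝ) ≤ k * (1 + t))]

end

theorem Real.rpow_one_div_sub_one_pow {x : ℝ} (hx : 0 ≤ x) (k : ℕ) :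
    (x ^ ((1 : ℝ) / (k - 1))) ^ k = x ^ ((k : ℝ) / (k - 1)) := by
  rw [← rpow_natCast, ← rpow_mul hx, one_div_mul_eq_div]

theorem Real.rpow_one_div_sub_one_pow_eq_mul {x : ℝ} (hx : 0 ≤ x) {k : ℕ} (hk : 1 < k) :
    (x ^ ((1 : ℝ) / (k - 1))) ^ k = x * x ^ ((1 : ℝ) / (k - 1)) := by
  have hk1 : (k : ℝ) - 1 ≠ 0 := sub_ne_zero.mpr (by exact_mod_cast hk.ne')
  have hexp : (k : ℝ) / (k - 1) = 1 + 1 / (k - 1) := by field_simp; ring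
  rw [rpow_one_div_sub_one_pow hx, hexp, rpow_one_add' hx]
  rw [← hexp]
  exact div_ne_zero (by positivity) hk1

theorem hoffman_weight_mul_rpow_eq {k : ℕ} (hk : 1 < k) {δ lam : ℝ} (hδ : 0 ≤ δ) (hlam : lam < 0) :
    (k * δ * (1 + δ ^ ((1 : ℝ) / (k - 1)) / (-lam) ^ ((1 : ℝ) / (k - 1))) -
        lam * (1 - (δ ^ ((1 : ℝ) / (k - 1)) / (-lam) ^ ((1 : ℝ) / (k - 1))) ^ k)) *
        (-lam) ^ ((1 : ℝ) / (k - 1)) =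
      (k - 1) * δ ^ ((k : ℝ) / (k - 1)) + (k * δ - lam) * (-lam) ^ ((1 : ℝ) / (k - 1)) := by
  have hμ : 0 ≤ -lam := by linarith
  have hlam0 : lam ≠ 0 := hlam.ne
  have hB : 0 < (-lam) ^ ((1 : ℝ) / (k - 1)) := Real.rpow_pos_of_pos (by linarith) _
  rw [div_pow, Real.rpow_one_div_sub_one_pow_eq_mul hμ hk, ← Real.rpow_one_div_sub_one_pow hδ,
    Real.rpow_one_div_sub_one_pow_eq_mul hδ hk]
  field_simp
  ring

/-- **Hoffman-type bound for the strong independence number of an even uniform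
hypergraph** (Corollary 3.1, inequality part, the case `t = 1`). -/
theorem hoffman_bound_strong_independence_even_hypergraph
    {V : Type*} [Fintype V] [DecidableEq V]
    (k : ℕ) (hk : Even k) (hk2 : 2 ≤ k)
    (E : Finset (Finset V)) (huniform : ∀ e ∈ E, e.card = k) (hm : 1 ≤ E.card)
    (δ : ℕ) (hδ : IsLeast (Set.range fun i : V => (E.filter fun e => i ∈ e).card) δ)
    (lam : ℝ)
    (hlam : IsLeast {y : ℝ | ∃ x : V → ℝ, ∑ i, x i ^ k = 1 ∧
      y = k * ∑ e ∈ E, ∏ i ∈ e, x i} lam)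
    (α : ℕ)
    (hα : IsGreatest {c : ℕ | ∃ S : Finset V,
      (∀ e ∈ E, (e ∩ S).card = 0 ∨ (e ∩ S).card = 1) ∧ S.card = c} α) :
    (α : ℝ) ≤ (k * E.card - Fintype.card V * lam) * (-lam) ^ ((1 : ℝ) / (k - 1)) /
      ((k - 1) * (δ : ℝ) ^ ((k : ℝ) / (k - 1)) +
        (k * δ - lam) * (-lam) ^ ((1 : ℝ) / (k - 1))) := by
  obtain ⟨S, hS, rfl⟩ := hα.1
  have hk0 : k ≠ 0 := by omega
  have hlam_neg : lam < 0 :=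
    (le_neg_one_of_mem_lowerBounds hk hk0 huniform (card_pos.mp hm) hlam.2).trans_lt (by norm_num)
  have hB : 0 < (-lam) ^ ((1 : ℝ) / (k - 1)) := Real.rpow_pos_of_pos (neg_pos.mpr hlam_neg) _
  have hbound := IsStronglyIndependent.card_mul_le hk hk0 huniform hlam.2
    (fun i => hδ.2 ⟨i, rfl⟩) hS (t := δ ^ ((1 : ℝ) / (k - 1)) / (-lam) ^ ((1 : ℝ) / (k - 1)))
    (by positivity)
  have hk1 : (1 : ℝ) < k := by exact_mod_cast hk2
  have hden : 0 < (k - 1) * (δ : ℝ) ^ ((k : ℝ) / (k - 1)) +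
      (k * δ - lam) * (-lam) ^ ((1 : ℝ) / (k - 1)) :=
    add_pos_of_nonneg_of_pos (mul_nonneg (by linarith) (by positivity))
      (mul_pos (sub_pos.mpr (hlam_neg.trans_le (by positivity))) hB)
  rw [le_div_iff₀ hden, ← hoffman_weight_mul_rpow_eq hk2 δ.cast_nonneg hlam_neg,
    ← mul_assoc]
  exact mul_le_mul_of_nonneg_right hbound hB.le
end

section
/- Let G be a finite simple graph on n vertices with minimum degree δ and average degree d̄ > 0, and let λ be the minimum eigenvalue of the adjacency matrix of G. If α(G) = −λ·n·(d̄ − λ) / (δ − λ)², then there exists an independent set S with |S| = α(G) such that every vertex in S has degree δ, and every vertex i ∉ S is adjacent to exactly −λ·(d_i − λ)/(δ − λ) vertices of S. -/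
/-!
Since `λ` is the least eigenvalue of `A`, the matrix `A - λI` is positive semidefinite.
Test it on `x = 1_S - t𝟙` for a maximum independent set `S` and `t = -λ/(δ - λ)`: with the
assumed value of `α`, `xᵀ(A - λI)x = 2λ/(δ - λ) · (∑_{v ∈ S} d_v - αδ)`, which is
`≤ 0` because `λ < 0` (the graph has an edge) and every degree is at least `δ`. So it vanishes:
every vertex of `S` has degree `δ`, and `x` lies in the kernel of `A - λI`, whose `i`-th row
for `i ∉ S` reads `|N(i) ∩ S| = t(d_i - λ)`.
-/

open Finset Matrix

namespace Matrix

variable {n R : Type*} [Fintype n] [DecidableEq n] [CommRing R]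

theorem sub_algebraMap_mulVec (A : Matrix n n R) (c : R) (x : n → R) :
    (A - algebraMap R (Matrix n n R) c) *ᵥ x = A *ᵥ x - c • x := by
  rw [sub_mulVec, Algebra.algebraMap_eq_smul_one, smul_mulVec, one_mulVec]

theorem dotProduct_sub_algebraMap_mulVec (A : Matrix n n R) (c : R) (x : n → R) :
    x ⬝ᵥ (A - algebraMap R (Matrix n n R) c) *ᵥ x = x ⬝ᵥ A *ᵥ x - c * (x ⬝ᵥ x) := by
  rw [sub_algebraMap_mulVec, dotProduct_sub, dotProduct_smul, smul_eq_mul]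

theorem posSemidef_sub_algebraMap_of_mem_lowerBounds {A : Matrix n n ℝ}
    (hA : A.IsHermitian) {c : ℝ} (hc : c ∈ lowerBounds (spectrum ℝ A)) :
    (A - algebraMap ℝ (Matrix n n ℝ) c).PosSemidef := by
  refine posSemidef_iff_isHermitian_and_spectrum_nonneg.mpr ⟨?_, ?_⟩
  · rw [algebraMap_eq_diagonal]
    exact hA.sub (isHermitian_diagonal _)
  · rw [← spectrum.sub_singleton_eq]
    rintro _ ⟨μ, hμ, _, rfl, rfl⟩
    exact sub_nonneg.mpr (hc hμ)

end Matrix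

section

variable {V : Type*} [Fintype V]

section shiftedIndicator

variable [DecidableEq V]

def shiftedIndicator (S : Finset V) (t : ℝ) : V → ℝ := fun v => (if v ∈ S then 1 else 0) - t

theorem shiftedIndicator_dotProduct_self (S : Finset V) (t : ℝ) :
    shiftedIndicator S t ⬝ᵥ shiftedIndicator S t
      = #S * (1 - 2 * t) + t ^ 2 * Fintype.card V := by
  have h : ∀ v, shiftedIndicator S t v * shiftedIndicator S t v
      = (if v ∈ S then 1 else 0) * (1 - 2 * t) + t ^ 2 := by
    intro v
    unfold shiftedIndicator
    split_ifs <;> ring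
  simp only [dotProduct, h, sum_add_distrib, ← sum_mul, sum_boole, filter_univ_mem, sum_const,
    card_univ, nsmul_eq_mul, mul_comm]

end shiftedIndicator

namespace SimpleGraph

variable (G : SimpleGraph V) [DecidableRel G.Adj]

theorem exists_adj_of_averageDegree_pos (h : 0 < (∑ v, (G.degree v : ℝ)) / Fintype.card V) :
    ∃ u w, G.Adj u w := by
  by_contra! hG
  have hdeg (v : V) : G.degree v = 0 := by
    by_contra hv
    obtain ⟨w, hw⟩ := (G.degree_pos_iff_exists_adj v).mp (Nat.pos_of_ne_zero hv)
    exact hG v w hw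
  simp [hdeg] at h

theorem le_neg_one_of_posSemidef_adjMatrix_sub [DecidableEq V] {c : ℝ}
    (hc : (G.adjMatrix ℝ - algebraMap ℝ (Matrix V V ℝ) c).PosSemidef) {u w : V}
    (huw : G.Adj u w) : c ≤ -1 := by
  have hne := G.ne_of_adj huw
  have h := hc.dotProduct_mulVec_nonneg (Pi.single u 1 - Pi.single w 1)
  rw [star_trivial, dotProduct_sub_algebraMap_mulVec] at h
  simp [mulVec_sub, sub_dotProduct, dotProduct_sub, huw, huw.symm, hne] at h
  linarith

theorem sum_card_filter_adj (S : Finset V) :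
    ∑ v, (#{j ∈ S | G.Adj v j} : ℝ) = ∑ j ∈ S, (G.degree j : ℝ) := by
  have := sum_card_bipartiteAbove_eq_sum_card_bipartiteBelow (s := univ) (t := S) (r := G.Adj)
  simp only [bipartiteAbove, bipartiteBelow] at this
  exact_mod_cast this.trans (sum_congr rfl fun j _ => by
    rw [← card_neighborFinset_eq_degree, neighborFinset_eq_filter]; simp [G.adj_comm])

variable [DecidableEq V]

theorem adjMatrix_mulVec_shiftedIndicator_apply (S : Finset V) (t : ℝ) (i : V) :
    (G.adjMatrix ℝ *ᵥ shiftedIndicator S t) i = #{j ∈ S | G.Adj i j} - t * G.degree i := by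
  have hnbr : {j ∈ G.neighborFinset i | j ∈ S} = {j ∈ S | G.Adj i j} := by
    ext j
    simp [and_comm]
  simp only [adjMatrix_mulVec_apply, shiftedIndicator, sum_sub_distrib, sum_boole, hnbr,
    sum_const, card_neighborFinset_eq_degree, nsmul_eq_mul, mul_comm]

theorem dotProduct_adjMatrix_mulVec_shiftedIndicator {S : Finset V}
    (hS : ∀ u ∈ S, ∀ v ∈ S, ¬ G.Adj u v) (t : ℝ) :
    shiftedIndicator S t ⬝ᵥ G.adjMatrix ℝ *ᵥ shiftedIndicator S t
      = -2 * t * ∑ v ∈ S, (G.degree v : ℝ) + t ^ 2 * ∑ v, (G.degree v : ℝ) := by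
  have hnbr : ∀ v ∈ S, #{j ∈ S | G.Adj v j} = 0 := fun v hv =>
    card_eq_zero.mpr (filter_eq_empty_iff.mpr (hS v hv))
  have h : ∀ v, shiftedIndicator S t v * (G.adjMatrix ℝ *ᵥ shiftedIndicator S t) v
      = (if v ∈ S then -t * (G.degree v : ℝ) else 0) - t * #{j ∈ S | G.Adj v j}
        + t ^ 2 * G.degree v := by
    intro v
    rw [adjMatrix_mulVec_shiftedIndicator_apply, shiftedIndicator]
    split_ifs with hv
    · rw [hnbr v hv]
      push_cast
      ring
    · ring
  simp only [dotProduct, h, sum_add_distrib, sum_sub_distrib, ← mul_sum, sum_ite_mem, univ_inter,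
    sum_card_filter_adj]
  ring

theorem card_filter_adj_of_sub_algebraMap_mulVec_eq_zero {S : Finset V} {c t : ℝ}
    (h : (G.adjMatrix ℝ - algebraMap ℝ (Matrix V V ℝ) c) *ᵥ shiftedIndicator S t = 0)
    {i : V} (hi : i ∉ S) : (#{j ∈ S | G.Adj i j} : ℝ) = t * (G.degree i - c) := by
  have hrow := congrFun h i
  simp only [sub_algebraMap_mulVec, Pi.sub_apply, Pi.smul_apply, smul_eq_mul, Pi.zero_apply,
    adjMatrix_mulVec_shiftedIndicator_apply, shiftedIndicator, hi, if_false] at hrow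
  linarith

end SimpleGraph

end

theorem independence_number_ratio_bound_condition_of_equality_general
    {V : Type*} [Fintype V] [DecidableEq V]
    (G : SimpleGraph V) [DecidableRel G.Adj]
    (δ : ℕ) (hδ : IsLeast (Set.range fun v : V => G.degree v) δ)
    (dbar : ℝ) (hdbar : dbar = (∑ v, (G.degree v : ℝ)) / Fintype.card V)
    (hdbar_pos : 0 < dbar)
    (lam : ℝ) (hlam : IsLeast (spectrum ℝ (G.adjMatrix ℝ)) lam)
    (α : ℕ)
    (hα : IsGreatest {c : ℕ | ∃ S : Finset V,
      (∀ u ∈ S, ∀ v ∈ S, ¬ G.Adj u v) ∧ S.card = c} α)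
    (heq : (α : ℝ) = -lam * Fintype.card V * (dbar - lam) / (δ - lam) ^ 2) :
    ∃ S : Finset V,
      (∀ u ∈ S, ∀ v ∈ S, ¬ G.Adj u v) ∧
      S.card = α ∧
      (∀ v ∈ S, G.degree v = δ) ∧
      (∀ i ∉ S, ((S.filter fun j => G.Adj i j).card : ℝ) =
        -lam * ((G.degree i : ℝ) - lam) / (δ - lam)) := by
  obtain ⟨S, hSind, hScard⟩ := hα.1
  obtain ⟨u, w, huw⟩ := G.exists_adj_of_averageDegree_pos (hdbar ▸ hdbar_pos)
  have hn : (Fintype.card V : ℝ) ≠ 0 :=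
    Nat.cast_ne_zero.mpr (Fintype.card_pos_iff.mpr ⟨u⟩).ne'
  have hM := posSemidef_sub_algebraMap_of_mem_lowerBounds (G.isHermitian_adjMatrix ℝ) hlam.2
  have hlam_neg : lam < 0 := by linarith [G.le_neg_one_of_posSemidef_adjMatrix_sub hM huw]
  have hδlam : 0 < (δ : ℝ) - lam := by linarith [δ.cast_nonneg (α := ℝ)]
  set x := shiftedIndicator S (-lam / (δ - lam))
  have hform : x ⬝ᵥ (G.adjMatrix ℝ - algebraMap ℝ _ lam) *ᵥ x
      = 2 * lam / (δ - lam) * (((∑ v ∈ S, G.degree v : ℕ) : ℝ) - (α * δ : ℕ)) := by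
    push_cast
    rw [dotProduct_sub_algebraMap_mulVec, G.dotProduct_adjMatrix_mulVec_shiftedIndicator hSind,
      shiftedIndicator_dotProduct_self, hScard, heq, hdbar]
    field_simp
    ring
  have hD : ∑ v ∈ S, G.degree v = α * δ := by
    refine le_antisymm ?_ (hScard ▸ card_nsmul_le_sum S _ δ fun v _ => hδ.2 ⟨v, rfl⟩)
    have hcoef : 2 * lam / (δ - lam) < 0 := div_neg_of_neg_of_pos (by linarith) hδlam
    have hQ := hform ▸ star_trivial x ▸ hM.dotProduct_mulVec_nonneg x
    exact_mod_cast sub_nonpos.mp (nonpos_of_mul_nonneg_right hQ hcoef)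
  have hker : (G.adjMatrix ℝ - algebraMap ℝ _ lam) *ᵥ x = 0 := by
    rw [← hM.dotProduct_mulVec_zero_iff, star_trivial, hform, hD, sub_self, mul_zero]
  refine ⟨S, hSind, hScard, fun v hv => ?_, fun i hi => ?_⟩
  · refine ((sum_eq_sum_iff_of_le fun v _ => hδ.2 ⟨v, rfl⟩).mp ?_ v hv).symm
    rw [sum_const, hScard, smul_eq_mul, hD]
  · rw [G.card_filter_adj_of_sub_algebraMap_mulVec_eq_zero hker hi]
    ring

/-- **Ratio bound for the independence number: necessity of the equality condition**
(Corollary 4.1). If `α(G) = −λ·n·(d̄ − λ)/(δ − λ)²`, then there is a maximum independent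
set `S` in which every vertex has degree `δ`, and every vertex `i ∉ S` is adjacent to
exactly `−λ(d_i − λ)/(δ − λ)` vertices of `S`. -/
theorem independence_number_ratio_bound_condition_of_equality
    {V : Type*} [Fintype V] [Nonempty V] [DecidableEq V]
    (G : SimpleGraph V) [DecidableRel G.Adj]
    (δ : ℕ) (hδ : IsLeast (Set.range fun v : V => G.degree v) δ)
    (dbar : ℝ) (hdbar : dbar = (∑ v, (G.degree v : ℝ)) / Fintype.card V)
    (hdbar_pos : 0 < dbar)
    (lam : ℝ) (hlam : IsLeast (spectrum ℝ (G.adjMatrix ℝ)) lam)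
    (α : ℕ)
    (hα : IsGreatest {c : ℕ | ∃ S : Finset V,
      (∀ u ∈ S, ∀ v ∈ S, ¬ G.Adj u v) ∧ S.card = c} α)
    (heq : (α : ℝ) = -lam * Fintype.card V * (dbar - lam) / (δ - lam) ^ 2) :
    ∃ S : Finset V,
      (∀ u ∈ S, ∀ v ∈ S, ¬ G.Adj u v) ∧
      S.card = α ∧
      (∀ v ∈ S, G.degree v = δ) ∧
      (∀ i ∉ S, ((S.filter fun j => G.Adj i j).card : ℝ) =
        -lam * ((G.degree i : ℝ) - lam) / (δ - lam)) :=
  independence_number_ratio_bound_condition_of_equality_general G δ hδ dbar hdbar hdbar_pos lam hlam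
    α hα heq
end
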